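/- arXiv:2402.14174 — 2 statements merged into one kernel-verified Lean document; each statement's English description precedes it below -/
import Mathlib

section
/- Minimizing over Gaussian policies: let f(μ, Σ) = (1/2)(μᵀ H μ + tr(H Σ)) + bᵀμ + (λ/2)(−log det Σ + log det Σ̃ + tr(Σ̃⁻¹Σ) + (μ−μ̃)ᵀΣ̃⁻¹(μ−μ̃)) with H symmetric positive semidefinite, Σ̃ positive definite, λ > 0. Then f is uniquely minimized over μ ∈ ℝᵐ and symmetric positive definite Σ at Σ* = ((1/λ)H + Σ̃⁻¹)⁻¹ and μ* = −(H + λΣ̃⁻¹)⁻¹(b − λΣ̃⁻¹μ̃). -/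
/-!
Completing the square in `μ` and collecting the trace terms, the objective splits as a quadratic
in `μ` with Hessian `H + λΣ̃⁻¹`, plus `λ/2` times `tr (B Σ) - log det Σ` with `B = H/λ + Σ̃⁻¹`,
plus a constant. The quadratic is uniquely minimized at `μ*`. For the second part, conjugating
by `Q = B^{1/2}` gives `tr M - log det M + log det B` with `M = Q Σ Q` positive definite, and
`tr M - log det M = ∑ (λᵢ - log λᵢ)` over the eigenvalues of `M`; since `x - log x ≥ 1` with
equality only at `x = 1`, the minimum is attained exactly at `M = 1`, that is `Σ = B⁻¹`.
-/

open Matrix Real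

def IsUniqueMinOn {α : Type*} (g : α → ℝ) (s : Set α) (a : α) : Prop :=
  ∀ x ∈ s, g a ≤ g x ∧ (g x = g a → x = a)

theorem IsUniqueMinOn.add_mul_add_const {α β : Type*} {g₁ : α → ℝ} {g₂ : β → ℝ}
    {s : Set α} {t : Set β} {a : α} {b : β} {c : ℝ} (h₁ : IsUniqueMinOn g₁ s a)
    (h₂ : IsUniqueMinOn g₂ t b) (hc : 0 < c) (k : ℝ) :
    IsUniqueMinOn (fun p : α × β => g₁ p.1 + c * g₂ p.2 + k) (s ×ˢ t) (a, b) := by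
  rintro ⟨x, y⟩ ⟨hx, hy⟩
  obtain ⟨hle₁, heq₁⟩ := h₁ x hx
  obtain ⟨hle₂, heq₂⟩ := h₂ y hy
  have hle₂' : c * g₂ b ≤ c * g₂ y := mul_le_mul_of_nonneg_left hle₂ hc.le
  refine ⟨by dsimp only; linarith, fun h => ?_⟩
  have h₂eq : c * g₂ y = c * g₂ b := by dsimp only at h; linarith
  exact Prod.ext (heq₁ (by dsimp only at h; linarith))
    (heq₂ (mul_left_cancel₀ hc.ne' h₂eq))

section

variable {n : Type*} [Fintype n] [DecidableEq n]

omit [DecidableEq n] in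
theorem dotProduct_mulVec_add_eq_of_mulVec_eq_neg {A : Matrix n n ℝ} (hA : A.IsSymm)
    {c y : n → ℝ} (hy : A *ᵥ y = -c) (x : n → ℝ) :
    (1/2) * (x ⬝ᵥ A *ᵥ x) + c ⬝ᵥ x
      = (1/2) * (y ⬝ᵥ A *ᵥ y) + c ⬝ᵥ y + (1/2) * ((x - y) ⬝ᵥ A *ᵥ (x - y)) := by
  have hyx : y ⬝ᵥ A *ᵥ x = x ⬝ᵥ A *ᵥ y := by
    rw [dotProduct_mulVec, ← mulVec_transpose, hA.eq, dotProduct_comm]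
  simp only [mulVec_sub, dotProduct_sub, sub_dotProduct, hyx, hy, dotProduct_neg,
    dotProduct_comm x c, dotProduct_comm y c]
  ring

theorem isUniqueMinOn_quadratic {A : Matrix n n ℝ} (hA : A.PosDef) (c : n → ℝ) :
    IsUniqueMinOn (fun x => (1/2) * (x ⬝ᵥ A *ᵥ x) + c ⬝ᵥ x) Set.univ (-(A⁻¹ *ᵥ c)) := by
  set y := -(A⁻¹ *ᵥ c)
  have hy : A *ᵥ y = -c := by
    rw [mulVec_neg, mulVec_mulVec, mul_nonsing_inv _ hA.det_pos.ne'.isUnit, one_mulVec]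
  intro x _
  have hsq := dotProduct_mulVec_add_eq_of_mulVec_eq_neg
    (isHermitian_iff_isSymm.mp hA.isHermitian) hy x
  refine ⟨?_, fun heq => ?_⟩
  · have := hA.posSemidef.dotProduct_mulVec_nonneg (x - y)
    simp only [star_trivial] at this
    dsimp only; linarith
  · by_contra hne
    have := hA.dotProduct_mulVec_pos (sub_ne_zero.mpr hne)
    simp only [star_trivial] at this
    dsimp only at heq; linarith

theorem Matrix.IsHermitian.eq_one_of_eigenvalues_eq_one {𝕜 : Type*} [RCLike 𝕜]
    {A : Matrix n n 𝕜} (hA : A.IsHermitian) (h : ∀ i, hA.eigenvalues i = 1) : A = 1 := by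
  rw [hA.spectral_theorem, show hA.eigenvalues = 1 from funext h]
  simp

theorem isUniqueMinOn_trace_sub_log_det :
    IsUniqueMinOn (fun M : Matrix n n ℝ => M.trace - log M.det) {M | M.PosDef} 1 := by
  intro M (hM : M.PosDef)
  set ev := hM.isHermitian.eigenvalues
  have hev : ∀ i, 0 < ev i := hM.eigenvalues_pos
  have hgap : ∀ i, 0 ≤ ev i - 1 - log (ev i) := fun i => by
    linarith [log_le_sub_one_of_pos (hev i)]
  have hsum : M.trace - log M.det - ((1 : Matrix n n ℝ).trace - log (1 : Matrix n n ℝ).det)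
      = ∑ i, (ev i - 1 - log (ev i)) := by
    rw [hM.isHermitian.trace_eq_sum_eigenvalues, hM.isHermitian.det_eq_prod_eigenvalues]
    simp only [RCLike.ofReal_real_eq_id, id_eq]
    rw [log_prod (fun i _ => (hev i).ne')]
    simp only [trace_one, det_one, log_one, Finset.sum_sub_distrib, Finset.sum_const,
      Finset.card_univ, nsmul_eq_mul, mul_one, sub_zero, ev]
    ring
  refine ⟨?_, fun heq => ?_⟩
  · dsimp only
    linarith [Finset.sum_nonneg fun i (_ : i ∈ Finset.univ) => hgap i]
  · refine hM.isHermitian.eq_one_of_eigenvalues_eq_one fun i => ?_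
    have hzero := (Finset.sum_eq_zero_iff_of_nonneg fun i _ => hgap i).mp
      (by dsimp only at heq; linarith) i (Finset.mem_univ i)
    by_contra hne
    linarith [log_lt_sub_one_of_pos (hev i) hne]

open scoped MatrixOrder in
theorem isUniqueMinOn_trace_mul_sub_log_det {B : Matrix n n ℝ} (hB : B.PosDef) :
    IsUniqueMinOn (fun S : Matrix n n ℝ => (B * S).trace - log S.det) {S | S.PosDef} B⁻¹ := by
  set Q := CFC.sqrt B
  have hQQ : Q * Q = B := CFC.sqrt_mul_sqrt_self B hB.posSemidef.nonneg
  have hQ : Q.IsHermitian := (CFC.sqrt_nonneg B).posSemidef.isHermitian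
  have hQunit : IsUnit Q := (CFC.isUnit_sqrt_iff B hB.posSemidef.nonneg).mpr hB.isUnit
  have hQdet : IsUnit Q.det := (isUnit_iff_isUnit_det Q).mp hQunit
  have hconj : ∀ S : Matrix n n ℝ, S.det ≠ 0 → (B * S).trace - log S.det
      = (Q * S * Q).trace - log (Q * S * Q).det + log B.det := fun S hS => by
    rw [trace_mul_cycle, hQQ, det_mul, det_mul, mul_comm Q.det, mul_assoc, ← det_mul, hQQ,
      log_mul hS hB.det_pos.ne']
    ring
  have hinv : Q * B⁻¹ * Q = 1 := by
    rw [← hQQ, Matrix.mul_inv_rev, mul_nonsing_inv_cancel_left _ _ hQdet, nonsing_inv_mul _ hQdet]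
  intro S (hS : S.PosDef)
  have hM : (Q * S * Q).PosDef := by
    simpa only [hQ.eq] using
      hS.conjTranspose_mul_mul_same (mulVec_injective_iff_isUnit.mpr hQunit)
  obtain ⟨hle, heq⟩ := isUniqueMinOn_trace_sub_log_det _ hM
  dsimp only at hle heq ⊢
  rw [hconj S hS.det_pos.ne', hconj B⁻¹ hB.inv.det_pos.ne', hinv]
  refine ⟨by linarith, fun h => ?_⟩
  have hQSQ : Q * S * Q = 1 := heq (by linarith)
  calc S = Q⁻¹ * (Q * S * Q) * Q⁻¹ := by
        rw [mul_assoc, mul_nonsing_inv_cancel_right _ _ hQdet,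
          nonsing_inv_mul_cancel_left _ _ hQdet]
    _ = B⁻¹ := by rw [hQSQ, mul_one, ← Matrix.mul_inv_rev, hQQ]

noncomputable def gaussianPolicyObjective (H : Matrix n n ℝ) (b μt : n → ℝ)
    (St : Matrix n n ℝ) (l : ℝ) (μ : n → ℝ) (S : Matrix n n ℝ) : ℝ :=
  (1/2) * (μ ⬝ᵥ H *ᵥ μ + (H * S).trace) + b ⬝ᵥ μ +
    (l/2) * (-(log S.det) + log St.det + (St⁻¹ * S).trace + (μ - μt) ⬝ᵥ St⁻¹ *ᵥ (μ - μt))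

theorem gaussianPolicyObjective_eq (H : Matrix n n ℝ) (b μt : n → ℝ) {St : Matrix n n ℝ}
    (hSt : St.IsSymm) {l : ℝ} (hl : l ≠ 0) (μ : n → ℝ) (S : Matrix n n ℝ) :
    gaussianPolicyObjective H b μt St l μ S =
      (1/2) * (μ ⬝ᵥ (H + l • St⁻¹) *ᵥ μ) + (b - l • St⁻¹ *ᵥ μt) ⬝ᵥ μ
        + (l/2) * ((((1/l) • H + St⁻¹) * S).trace - log S.det)
        + (l/2) * (log St.det + μt ⬝ᵥ St⁻¹ *ᵥ μt) := by
  have hcross : μt ⬝ᵥ St⁻¹ *ᵥ μ = μ ⬝ᵥ St⁻¹ *ᵥ μt := by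
    rw [dotProduct_mulVec, ← mulVec_transpose, hSt.inv.eq, dotProduct_comm]
  simp only [gaussianPolicyObjective, add_mulVec, smul_mulVec, dotProduct_add, dotProduct_smul,
    mulVec_sub, dotProduct_sub, sub_dotProduct, smul_dotProduct, add_mul, smul_mul, trace_add,
    trace_smul, smul_eq_mul, hcross, dotProduct_comm (St⁻¹ *ᵥ μt) μ]
  field_simp
  ring

end

theorem gaussian_policy_unique_minimizer_general {m : ℕ}
    (H : Matrix (Fin m) (Fin m) ℝ) (hH : H.PosSemidef)
    (b μt : Fin m → ℝ) (St : Matrix (Fin m) (Fin m) ℝ) (hSt : St.PosDef)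
    (l : ℝ) (hl : 0 < l) :
    let f : (Fin m → ℝ) → Matrix (Fin m) (Fin m) ℝ → ℝ := fun μ S =>
      (1/2) * (μ ⬝ᵥ H.mulVec μ + (H * S).trace) + b ⬝ᵥ μ +
        (l/2) * (-(Real.log S.det) + Real.log St.det + (St⁻¹ * S).trace +
          (μ - μt) ⬝ᵥ St⁻¹.mulVec (μ - μt))
    let Sstar := ((1/l) • H + St⁻¹)⁻¹
    let μstar := -(H + l • St⁻¹)⁻¹.mulVec (b - l • St⁻¹.mulVec μt)
    ∀ (μ : Fin m → ℝ) (S : Matrix (Fin m) (Fin m) ℝ), S.PosDef → S.IsSymm →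
      f μstar Sstar ≤ f μ S ∧ (f μ S = f μstar Sstar → μ = μstar ∧ S = Sstar) := by
  intro f Sstar μstar μ S hS _
  have hA : (H + l • St⁻¹).PosDef := PosDef.posSemidef_add hH (hSt.inv.smul hl)
  have hB : ((1/l) • H + St⁻¹).PosDef := PosDef.posSemidef_add (hH.smul (by positivity)) hSt.inv
  have hmin : IsUniqueMinOn (fun p => f p.1 p.2) (Set.univ ×ˢ {S | S.PosDef}) (μstar, Sstar) := by
    convert (isUniqueMinOn_quadratic hA _).add_mul_add_const
      (isUniqueMinOn_trace_mul_sub_log_det hB) (half_pos hl) _ using 2 with p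
    exact gaussianPolicyObjective_eq H b μt (isHermitian_iff_isSymm.mp hSt.isHermitian) hl.ne' _ _
  obtain ⟨hle, heq⟩ := hmin (μ, S) ⟨trivial, hS⟩
  exact ⟨hle, fun h => Prod.ext_iff.mp (heq h)⟩

/-- The Gaussian-policy objective (expected quadratic cost plus `λ` times the KL divergence to a
Gaussian reference, constants omitted) is uniquely minimized over means `μ` and symmetric positive
definite covariances `Σ` at `Σ* = ((1/λ)H + Σ̃⁻¹)⁻¹` and `μ* = −(H + λΣ̃⁻¹)⁻¹(b − λΣ̃⁻¹μ̃)`. -/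
theorem gaussian_policy_unique_minimizer {m : ℕ}
    (H : Matrix (Fin m) (Fin m) ℝ) (hH : H.PosSemidef) (hHsymm : H.IsSymm)
    (b μt : Fin m → ℝ) (St : Matrix (Fin m) (Fin m) ℝ) (hSt : St.PosDef)
    (l : ℝ) (hl : 0 < l) :
    let f : (Fin m → ℝ) → Matrix (Fin m) (Fin m) ℝ → ℝ := fun μ S =>
      (1/2) * (μ ⬝ᵥ H.mulVec μ + (H * S).trace) + b ⬝ᵥ μ +
        (l/2) * (-(Real.log S.det) + Real.log St.det + (St⁻¹ * S).trace +
          (μ - μt) ⬝ᵥ St⁻¹.mulVec (μ - μt))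
    let Sstar := ((1/l) • H + St⁻¹)⁻¹
    let μstar := -(H + l • St⁻¹)⁻¹.mulVec (b - l • St⁻¹.mulVec μt)
    ∀ (μ : Fin m → ℝ) (S : Matrix (Fin m) (Fin m) ℝ), S.PosDef → S.IsSymm →
      f μstar Sstar ≤ f μ S ∧ (f μ S = f μstar Sstar → μ = μstar ∧ S = Sstar) :=
  gaussian_policy_unique_minimizer_general H hH b μt St hSt l hl
end

section
/- As the regularization weight tends to zero, the KL-regularized Gaussian optimum converges to the deterministic unregularized optimum: with H symmetric positive definite, b ∈ ℝᵐ, Σ̃ ≻ 0, the mean μ*(λ) = −(H + λΣ̃⁻¹)⁻¹(b − λΣ̃⁻¹μ̃) converges to −H⁻¹b and the covariance Σ*(λ) = ((1/λ)H + Σ̃⁻¹)⁻¹ converges to 0 as λ → 0⁺. -/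
open Matrix Filter Topology

/-
The optimal covariance is `((1/λ)H + Σ̃⁻¹)⁻¹ = λ (H + λΣ̃⁻¹)⁻¹`, so both the mean and the rescaled
covariance are expressed through `λ ↦ (H + λΣ̃⁻¹)⁻¹`, which is continuous at `λ = 0` with value
`H⁻¹` because matrix inversion is continuous at every invertible matrix. Hence the mean tends to
`-H⁻¹b` and the covariance to `0 · H⁻¹ = 0`.
-/

theorem Filter.Tendsto.matrix_mulVec {α m n R : Type*} [Fintype n] [NonUnitalNonAssocSemiring R]
    [TopologicalSpace R] [ContinuousAdd R] [ContinuousMul R] {l : Filter α}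
    {A : α → Matrix m n R} {v : α → n → R} {A₀ : Matrix m n R} {v₀ : n → R}
    (hA : Tendsto A l (𝓝 A₀)) (hv : Tendsto v l (𝓝 v₀)) :
    Tendsto (fun x => A x *ᵥ v x) l (𝓝 (A₀ *ᵥ v₀)) :=
  ((continuous_fst.matrix_mulVec continuous_snd).tendsto (A₀, v₀)).comp (hA.prodMk_nhds hv)

namespace Matrix

variable {n 𝕜 : Type*} [Fintype n] [DecidableEq n] [Field 𝕜]

theorem inv_smul₀ (k : 𝕜) (A : Matrix n n 𝕜) : (k • A)⁻¹ = k⁻¹ • A⁻¹ := by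
  rcases eq_or_ne k 0 with rfl | hk
  · simp
  by_cases hA : IsUnit A.det
  · exact inv_smul' A (Units.mk0 k hk) hA
  · have hkA : ¬IsUnit (k • A).det := by
      rw [isUnit_iff_ne_zero, not_not] at hA ⊢
      rw [det_smul, hA, mul_zero]
    rw [nonsing_inv_apply_not_isUnit _ hA, nonsing_inv_apply_not_isUnit _ hkA, smul_zero]

theorem inv_inv_smul_add {l : 𝕜} (hl : l ≠ 0) (A B : Matrix n n 𝕜) :
    (l⁻¹ • A + B)⁻¹ = l • (A + l • B)⁻¹ := by
  rw [show l⁻¹ • A + B = l⁻¹ • (A + l • B) by rw [smul_add, inv_smul_smul₀ hl], inv_smul₀, inv_inv]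

variable [TopologicalSpace 𝕜] [IsTopologicalDivisionRing 𝕜]

theorem continuousAt_inv_of_isUnit_det {A : Matrix n n 𝕜} (hA : IsUnit A.det) :
    ContinuousAt Inv.inv A :=
  continuousAt_matrix_inv A <| by
    rw [Ring.inverse_eq_inv']
    exact continuousAt_inv₀ hA.ne_zero

theorem tendsto_inv_add_smul {A : Matrix n n 𝕜} (hA : IsUnit A.det) (B : Matrix n n 𝕜) :
    Tendsto (fun l : 𝕜 => (A + l • B)⁻¹) (𝓝 0) (𝓝 A⁻¹) := by
  have hcont : ContinuousAt (fun l : 𝕜 => (A + l • B)⁻¹) 0 :=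
    ContinuousAt.comp (by simpa using continuousAt_inv_of_isUnit_det hA) (by fun_prop)
  simpa using hcont.tendsto

theorem tendsto_inv_inv_smul_add {A : Matrix n n 𝕜} (hA : IsUnit A.det) (B : Matrix n n 𝕜) :
    Tendsto (fun l : 𝕜 => (l⁻¹ • A + B)⁻¹) (𝓝[≠] 0) (𝓝 0) := by
  have hscaled : Tendsto (fun l : 𝕜 => l • (A + l • B)⁻¹) (𝓝 0) (𝓝 ((0 : 𝕜) • A⁻¹)) :=
    tendsto_id.smul (tendsto_inv_add_smul hA B)
  rw [zero_smul] at hscaled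
  exact (hscaled.mono_left nhdsWithin_le_nhds).congr'
    (eventually_nhdsWithin_of_forall fun l hl => (inv_inv_smul_add hl A B).symm)

end Matrix

theorem kl_optimum_tendsto_deterministic_general {m : ℕ}
    (H : Matrix (Fin m) (Fin m) ℝ) (hH : H.PosDef)
    (b μt : Fin m → ℝ) (St : Matrix (Fin m) (Fin m) ℝ) :
    Tendsto (fun l : ℝ => -(H + l • St⁻¹)⁻¹.mulVec (b - l • St⁻¹.mulVec μt))
      (nhdsWithin 0 (Set.Ioi 0)) (nhds (-(H⁻¹.mulVec b))) ∧
    Tendsto (fun l : ℝ => ((1/l) • H + St⁻¹)⁻¹)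
      (nhdsWithin 0 (Set.Ioi 0)) (nhds 0) := by
  have hdet : IsUnit H.det := (isUnit_iff_isUnit_det H).1 hH.isUnit
  have hright : 𝓝[Set.Ioi 0] (0 : ℝ) ≤ 𝓝[≠] 0 := nhdsWithin_mono _ fun _ hl => ne_of_gt hl
  constructor
  · have hrhs : Tendsto (fun l : ℝ => b - l • St⁻¹ *ᵥ μt) (𝓝 0) (𝓝 b) := by
      simpa using ((tendsto_id (x := 𝓝 (0 : ℝ))).smul_const (St⁻¹ *ᵥ μt)).const_sub b
    exact ((tendsto_inv_add_smul hdet St⁻¹).matrix_mulVec hrhs).neg.mono_left nhdsWithin_le_nhds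
  · simpa only [one_div] using (tendsto_inv_inv_smul_add hdet St⁻¹).mono_left hright

/-- As the regularization weight `λ → 0⁺`, the KL-regularized Gaussian optimum converges to the
deterministic unregularized optimum: `μ*(λ) = −(H + λΣ̃⁻¹)⁻¹(b − λΣ̃⁻¹μ̃) → −H⁻¹b` and
`Σ*(λ) = ((1/λ)H + Σ̃⁻¹)⁻¹ → 0`. -/
theorem kl_optimum_tendsto_deterministic {m : ℕ}
    (H : Matrix (Fin m) (Fin m) ℝ) (hH : H.PosDef)
    (b μt : Fin m → ℝ) (St : Matrix (Fin m) (Fin m) ℝ) (hSt : St.PosDef) :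
    Tendsto (fun l : ℝ => -(H + l • St⁻¹)⁻¹.mulVec (b - l • St⁻¹.mulVec μt))
      (nhdsWithin 0 (Set.Ioi 0)) (nhds (-(H⁻¹.mulVec b))) ∧
    Tendsto (fun l : ℝ => ((1/l) • H + St⁻¹)⁻¹)
      (nhdsWithin 0 (Set.Ioi 0)) (nhds 0) :=
  kl_optimum_tendsto_deterministic_general H hH b μt St
end
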